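/- arXiv:2208.10321 — 3 statements merged into one kernel-verified Lean document; each statement's English description precedes it below -/
import Mathlib

section
/- Finite termination of the cut-addition process: Let X ⊆ ℝ^d and Ξ ⊆ ℝ^m be compact, ε > 0, and g : ℝ^d × ℝ^m → ℝ Lipschitz on X × Ξ. Suppose sequences (x^k) ⊆ X and finite sets Ξ^k ⊆ Ξ are constructed so that x^{k+1} satisfies g(x^{k+1}, ξ̄) ≤ 0 for all ξ̄ ∈ Ξ^k, and Ξ^{k+1} = Ξ^k ∪ {ξ^{k+1}} only when ξ^{k+1} ∈ Ξ satisfies g(x^{k+1}, ξ^{k+1}) ≥ max_{ξ∈Ξ} g(x^{k+1}, ξ) − ε/2 and g(x^{k+1}, ξ^{k+1}) > ε/2 (otherwise Ξ^{k+1} = Ξ^k). Then there exists K ∈ ℕ such that Ξ^{k₁} = Ξ^{k₂} for all k₁, k₂ ≥ K, and max_{ξ∈Ξ} g(x^k, ξ) ≤ ε for all k ≥ K. -/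
open Set Metric
open scoped NNReal ENNReal

/-!
A cut `ξ` added at step `k` has `g (x (k+1)) ξ > ε / 2`, while every earlier cut `η` has
`g (x (k+1)) η ≤ 0` by feasibility, so Lipschitz continuity gives `‖ξ - η‖ > ε / (2 L)`. All cuts
ever added thus form an `ε / (2 L)`-separated subset of the compact set `Ξ`, which is finite, and
the increasing cut sets stabilise. After that no valid cut exists (it would already be a cut, where
`g ≤ 0`), and having no `ε / 2`-maximiser above `ε / 2` forces `max g ≤ ε`.
-/

theorem Metric.IsSeparated.finite_of_totallyBounded {X : Type*} [PseudoEMetricSpace X]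
    {ε : ℝ≥0} {s t : Set X} (hs : IsSeparated ε s) (hε : ε ≠ 0) (ht : TotallyBounded t)
    (hst : s ⊆ t) : s.Finite := by
  obtain ⟨N, -, hNfin, hN⟩ :=
    exists_finite_isCover_of_totallyBounded (ε := ε / 2) (by simpa using hε) ht
  have : s.encard ≤ N.encard := calc
    s.encard ≤ packingNumber (2 * (ε / 2)) t := by
      rw [mul_div_cancel₀ _ two_ne_zero]; exact hs.encard_le_packingNumber hst
    _ ≤ externalCoveringNumber (ε / 2) t := packingNumber_two_mul_le_externalCoveringNumber _ _
    _ ≤ N.encard := hN.externalCoveringNumber_le_encard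
  exact Set.encard_lt_top_iff.mp (this.trans_lt hNfin.encard_lt_top)

theorem Monotone.exists_forall_ge_eq_iUnion {ι α : Type*} [Preorder ι] [IsDirectedOrder ι]
    [Nonempty ι] {f : ι → Set α} (hf : Monotone f) (hfin : (⋃ i, f i).Finite) :
    ∃ i, ∀ j, i ≤ j → f j = ⋃ i, f i := by
  obtain ⟨i, hi⟩ := hf.directed_le.exists_mem_subset_of_finset_subset_biUnion
    (s := hfin.toFinset) (by simp)
  exact ⟨i, fun j hij => (subset_iUnion f j).antisymm (by simpa using hi.trans (hf hij))⟩

theorem LipschitzOnWith.div_lt_dist_of_nonpos_of_lt {α : Type*} [PseudoMetricSpace α] {K : ℝ≥0}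
    {f : α → ℝ} {s : Set α} (hf : LipschitzOnWith K f s) (hK : 0 < K) {a b : α}
    (ha : a ∈ s) (hb : b ∈ s) {c : ℝ} (hfa : f a ≤ 0) (hfb : c < f b) : c / K < dist a b := by
  rw [div_lt_iff₀ (by exact_mod_cast hK), mul_comm]
  calc c < f b - f a := by linarith
    _ ≤ dist (f b) (f a) := le_abs_self _
    _ ≤ K * dist b a := hf.dist_le_mul b hb a ha
    _ = K * dist a b := by rw [dist_comm]

section CutSets

variable {β : Type*} [PseudoMetricSpace β] {Ξ : Set β} {f : ℕ → β → ℝ} {Ξs : ℕ → Set β}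
  {c : ℝ} {K : ℝ≥0}

theorem isSeparated_cutSets (hc : 0 < c) (hK : 0 < K) (hf : ∀ k, LipschitzOnWith K (f k) Ξ)
    (h0 : Ξs 0 = ∅) (hsub : ∀ k, Ξs k ⊆ Ξ) (hfeas : ∀ k, ∀ ξ ∈ Ξs k, f k ξ ≤ 0)
    (hstep : ∀ k, Ξs (k + 1) = Ξs k ∨ ∃ ξ ∈ Ξ, c < f k ξ ∧ Ξs (k + 1) = insert ξ (Ξs k))
    (k : ℕ) : IsSeparated (ENNReal.ofReal (c / K)) (Ξs k) := by
  induction k with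
  | zero => exact h0 ▸ .empty
  | succ k ih =>
    rcases hstep k with h | ⟨ξ, hξ, hξc, h⟩
    · exact h ▸ ih
    refine h ▸ ih.insert fun η hη _ => ?_
    rw [edist_comm, edist_dist]
    have hdist := (hf k).div_lt_dist_of_nonpos_of_lt hK (hsub k hη) hξ (hfeas k η hη) hξc
    have hδ : 0 < c / K := div_pos hc (by exact_mod_cast hK)
    exact ENNReal.ofReal_lt_ofReal_iff'.2 ⟨hdist, hδ.trans hdist⟩

theorem exists_forall_ge_cutSets_eq_iUnion (hc : 0 < c) (hK : 0 < K)
    (hΞ : TotallyBounded Ξ) (hf : ∀ k, LipschitzOnWith K (f k) Ξ) (h0 : Ξs 0 = ∅)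
    (hsub : ∀ k, Ξs k ⊆ Ξ) (hfeas : ∀ k, ∀ ξ ∈ Ξs k, f k ξ ≤ 0)
    (hstep : ∀ k, Ξs (k + 1) = Ξs k ∨ ∃ ξ ∈ Ξ, c < f k ξ ∧ Ξs (k + 1) = insert ξ (Ξs k)) :
    ∃ N, ∀ n, N ≤ n → Ξs n = ⋃ k, Ξs k := by
  have hmono : Monotone Ξs := monotone_nat_of_le_succ fun k => by
    rcases hstep k with h | ⟨ξ, -, -, h⟩ <;> simp [h]
  have hsep : IsSeparated (ENNReal.ofReal (c / K)) (⋃ k, Ξs k) :=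
    (pairwise_iUnion hmono.directed_le).2 (isSeparated_cutSets hc hK hf h0 hsub hfeas hstep)
  have hδ : (c / K).toNNReal ≠ 0 := (Real.toNNReal_pos.2 (div_pos hc (by exact_mod_cast hK))).ne'
  exact hmono.exists_forall_ge_eq_iUnion
    (hsep.finite_of_totallyBounded hδ hΞ (iUnion_subset hsub))

end CutSets

theorem le_of_not_exists_almost_maximizer_gt {β : Type*} {h : β → ℝ} {S : Set β}
    (hbdd : BddAbove (h '' S)) {ε : ℝ} (hε : 0 < ε)
    (hno : ¬ ∃ η ∈ S, h η ≥ sSup (h '' S) - ε / 2 ∧ h η > ε / 2) {ξ : β} (hξ : ξ ∈ S) :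
    h ξ ≤ ε := by
  by_contra! hlt
  obtain ⟨_, ⟨η, hη, rfl⟩, hηsup⟩ :=
    exists_lt_of_lt_csSup ⟨_, mem_image_of_mem h hξ⟩ (sub_lt_self _ (half_pos hε))
  have hξsup := le_csSup hbdd (mem_image_of_mem h hξ)
  exact hno ⟨η, hη, hηsup.le, by linarith⟩

theorem cut_addition_finite_termination_general {d m : ℕ}
    (X : Set (EuclideanSpace ℝ (Fin d))) (Ξ : Set (EuclideanSpace ℝ (Fin m)))
    (hΞ : IsCompact Ξ)
    (g : EuclideanSpace ℝ (Fin d) → EuclideanSpace ℝ (Fin m) → ℝ)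
    (L : ℝ) (hL : 0 < L)
    (hLip : ∀ x ∈ X, ∀ x' ∈ X, ∀ ξ ∈ Ξ, ∀ ξ' ∈ Ξ,
      |g x ξ - g x' ξ'| ≤ L * (‖x - x'‖ + ‖ξ - ξ'‖))
    (ε : ℝ) (hε : 0 < ε)
    (x : ℕ → EuclideanSpace ℝ (Fin d)) (hx : ∀ k, x k ∈ X)
    (Ξs : ℕ → Set (EuclideanSpace ℝ (Fin m)))
    (hΞs0 : Ξs 0 = ∅) (hΞsub : ∀ k, Ξs k ⊆ Ξ)
    -- primal feasibility: `x (k+1)` satisfies the constraints imposed by the cuts in `Ξs k`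
    (hfeas : ∀ k, ∀ ξ' ∈ Ξs k, g (x (k + 1)) ξ' ≤ 0)
    -- cut addition: either a valid cut is added, or no valid cut exists and the set is unchanged
    (hcut : ∀ k, (∃ ξ' ∈ Ξ,
        g (x (k + 1)) ξ' ≥ sSup ((fun ξ => g (x (k + 1)) ξ) '' Ξ) - ε / 2 ∧
        g (x (k + 1)) ξ' > ε / 2 ∧ Ξs (k + 1) = Ξs k ∪ {ξ'}) ∨
      (Ξs (k + 1) = Ξs k ∧ ¬ ∃ ξ' ∈ Ξ,
        g (x (k + 1)) ξ' ≥ sSup ((fun ξ => g (x (k + 1)) ξ) '' Ξ) - ε / 2 ∧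
        g (x (k + 1)) ξ' > ε / 2)) :
    ∃ K : ℕ, 1 ≤ K ∧ (∀ k₁ k₂, K ≤ k₁ → K ≤ k₂ → Ξs k₁ = Ξs k₂) ∧
      ∀ k, K ≤ k → ∀ ξ ∈ Ξ, g (x k) ξ ≤ ε := by
  have hLipξ (k : ℕ) : LipschitzOnWith L.toNNReal (g (x k)) Ξ :=
    .of_dist_le_mul fun ξ hξ ξ' hξ' => by
      simpa [Real.dist_eq, dist_eq_norm, hL.le] using hLip _ (hx k) _ (hx k) ξ hξ ξ' hξ'
  have hstep (k : ℕ) : Ξs (k + 1) = Ξs k ∨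
      ∃ ξ ∈ Ξ, ε / 2 < g (x (k + 1)) ξ ∧ Ξs (k + 1) = insert ξ (Ξs k) :=
    (hcut k).elim (fun ⟨ξ, hξ, _, hgt, h⟩ => .inr ⟨ξ, hξ, hgt, h.trans (union_singleton ..)⟩)
      (fun h => .inl h.1)
  obtain ⟨N, hN⟩ := exists_forall_ge_cutSets_eq_iUnion (half_pos hε) (Real.toNNReal_pos.2 hL)
    hΞ.totallyBounded (fun k => hLipξ (k + 1)) hΞs0 hΞsub hfeas hstep
  refine ⟨N + 1, Nat.le_add_left 1 N,
    fun k₁ k₂ h₁ h₂ => (hN k₁ (by omega)).trans (hN k₂ (by omega)).symm, ?_⟩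
  rintro n hn ξ hξ
  obtain ⟨k, rfl⟩ : ∃ k, n = k + 1 := ⟨n - 1, by omega⟩
  have hstable : Ξs (k + 1) = Ξs k := (hN _ (by omega)).trans (hN k (by omega)).symm
  have hno := (hcut k).resolve_left fun ⟨ξ', _, _, hgt, h⟩ =>
    (hfeas k ξ' (hstable ▸ h ▸ mem_union_right _ rfl)).not_gt ((half_pos hε).trans hgt)
  exact le_of_not_exists_almost_maximizer_gt (hΞ.bddAbove_image (hLipξ _).continuousOn) hε
    hno.2 hξ

/-- Lemma A.1: finite termination of the cut-addition process. -/
theorem cut_addition_finite_termination {d m : ℕ}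
    (X : Set (EuclideanSpace ℝ (Fin d))) (Ξ : Set (EuclideanSpace ℝ (Fin m)))
    (hX : IsCompact X) (hΞ : IsCompact Ξ) (hΞne : Ξ.Nonempty)
    (g : EuclideanSpace ℝ (Fin d) → EuclideanSpace ℝ (Fin m) → ℝ)
    (L : ℝ) (hL : 0 < L)
    (hLip : ∀ x ∈ X, ∀ x' ∈ X, ∀ ξ ∈ Ξ, ∀ ξ' ∈ Ξ,
      |g x ξ - g x' ξ'| ≤ L * (‖x - x'‖ + ‖ξ - ξ'‖))
    (ε : ℝ) (hε : 0 < ε)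
    (x : ℕ → EuclideanSpace ℝ (Fin d)) (hx : ∀ k, x k ∈ X)
    (Ξs : ℕ → Set (EuclideanSpace ℝ (Fin m)))
    (hΞs0 : Ξs 0 = ∅) (hΞsub : ∀ k, Ξs k ⊆ Ξ) (hΞfin : ∀ k, (Ξs k).Finite)
    -- primal feasibility: `x (k+1)` satisfies the constraints imposed by the cuts in `Ξs k`
    (hfeas : ∀ k, ∀ ξ' ∈ Ξs k, g (x (k + 1)) ξ' ≤ 0)
    -- cut addition: either a valid cut is added, or no valid cut exists and the set is unchanged
    (hcut : ∀ k, (∃ ξ' ∈ Ξ,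
        g (x (k + 1)) ξ' ≥ sSup ((fun ξ => g (x (k + 1)) ξ) '' Ξ) - ε / 2 ∧
        g (x (k + 1)) ξ' > ε / 2 ∧ Ξs (k + 1) = Ξs k ∪ {ξ'}) ∨
      (Ξs (k + 1) = Ξs k ∧ ¬ ∃ ξ' ∈ Ξ,
        g (x (k + 1)) ξ' ≥ sSup ((fun ξ => g (x (k + 1)) ξ) '' Ξ) - ε / 2 ∧
        g (x (k + 1)) ξ' > ε / 2)) :
    ∃ K : ℕ, 1 ≤ K ∧ (∀ k₁ k₂, K ≤ k₁ → K ≤ k₂ → Ξs k₁ = Ξs k₂) ∧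
      ∀ k, K ≤ k → ∀ ξ ∈ Ξ, g (x k) ξ ≤ ε :=
  cut_addition_finite_termination_general X Ξ hΞ g L hL hLip ε hε x hx Ξs hΞs0 hΞsub hfeas hcut
end

section
/- Compact domain for the DRO optimizers (Lemma 3.1): Any optimizer (x*, s*, v*) of the semi-infinite reformulated DRO problem — minimizing 1^⊤ v + Lθ s over x ∈ X, s ≥ 0, v ∈ ℝ^L subject to f(x,ξ) − v_ℓ − s‖ξ − ξ̂^ℓ‖ ≤ 0 for all ξ ∈ Ξ and ℓ ∈ {1,…,L} — with optimal value at most L f̄ satisfies s* ∈ [0, (f̄ − f̲)/θ] and v* ∈ [f̲, f̲ + L(f̄ − f̲)]^L. -/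
/-! Evaluating the `ℓ`-th constraint at its own sample `ξ = ξ̂^ℓ` kills the transport term and
gives `f̲ ≤ f(x*, ξ̂^ℓ) ≤ v*_ℓ`. Hence `∑ v* ≥ L f̲`, and the bound `L f̄` on the objective leaves
room of at most `L (f̄ - f̲)` both for `Lθ s*` and for the excess `v*_ℓ - f̲` of any single entry. -/

open Finset

section SumBounds

variable {ι : Type*} [Fintype ι] {v : ι → ℝ} {a b c : ℝ}

theorem le_card_mul_sub_of_sum_add_le (hv : ∀ i, a ≤ v i)
    (hsum : ∑ i, v i + c ≤ Fintype.card ι * b) : c ≤ Fintype.card ι * (b - a) := by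
  have hlow : Fintype.card ι * a ≤ ∑ i, v i := by
    simpa using card_nsmul_le_sum univ v a fun i _ => hv i
  linarith

/-- Each `v i - a` is a nonnegative summand of `∑ j, (v j - a) ≤ card ι * (b - a) - c`. -/
theorem le_add_card_mul_sub_of_sum_add_le (hv : ∀ i, a ≤ v i) (hc : 0 ≤ c)
    (hsum : ∑ i, v i + c ≤ Fintype.card ι * b) (i : ι) :
    v i ≤ a + Fintype.card ι * (b - a) := by
  have hsingle : v i - a ≤ ∑ j, (v j - a) :=
    single_le_sum (fun j _ => sub_nonneg.mpr (hv j)) (mem_univ i)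
  rw [sum_sub_distrib, sum_const, card_univ, nsmul_eq_mul] at hsingle
  linarith

end SumBounds

theorem le_of_sub_sub_mul_norm_sub_nonpos {E : Type*} [SeminormedAddCommGroup E]
    {g : E → ℝ} {Ξ : Set E} {ξ₀ : E} {v s : ℝ}
    (hfeas : ∀ ξ ∈ Ξ, g ξ - v - s * ‖ξ - ξ₀‖ ≤ 0) (hξ₀ : ξ₀ ∈ Ξ) : g ξ₀ ≤ v := by
  have h := hfeas ξ₀ hξ₀
  rw [sub_self, norm_zero, mul_zero, sub_zero, sub_nonpos] at h
  exact h

theorem dro_compact_domain_general {d m : ℕ} (L : ℕ) (hL : 1 ≤ L)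
    (X : Set (EuclideanSpace ℝ (Fin d))) (Ξ : Set (EuclideanSpace ℝ (Fin m)))
    (f : EuclideanSpace ℝ (Fin d) → EuclideanSpace ℝ (Fin m) → ℝ)
    (flow fbar : ℝ) (hbnd : ∀ x ∈ X, ∀ ξ ∈ Ξ, flow ≤ f x ξ ∧ f x ξ ≤ fbar)
    (ξhat : Fin L → EuclideanSpace ℝ (Fin m)) (hξhat : ∀ ℓ, ξhat ℓ ∈ Ξ)
    (θ : ℝ) (hθ : 0 < θ)
    (xstar : EuclideanSpace ℝ (Fin d)) (hx : xstar ∈ X)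
    (sstar : ℝ) (hs : 0 ≤ sstar) (vstar : Fin L → ℝ)
    -- feasibility for the semi-infinite constraints
    (hfeas : ∀ ℓ : Fin L, ∀ ξ ∈ Ξ,
      f xstar ξ - vstar ℓ - sstar * ‖ξ - ξhat ℓ‖ ≤ 0)
    -- objective value at most L f̄ (from optimality and L J*_ref = L J*_DRO ≤ L f̄)
    (hval : ∑ ℓ, vstar ℓ + (L : ℝ) * θ * sstar ≤ (L : ℝ) * fbar) :
    sstar ∈ Set.Icc (0 : ℝ) ((fbar - flow) / θ) ∧
      ∀ ℓ : Fin L, vstar ℓ ∈ Set.Icc flow (flow + (L : ℝ) * (fbar - flow)) := by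
  have hv : ∀ ℓ, flow ≤ vstar ℓ := fun ℓ =>
    (hbnd xstar hx _ (hξhat ℓ)).1.trans
      (le_of_sub_sub_mul_norm_sub_nonpos (hfeas ℓ) (hξhat ℓ))
  have hval' : ∑ ℓ, vstar ℓ + L * θ * sstar ≤ Fintype.card (Fin L) * fbar := by
    rwa [Fintype.card_fin]
  have hc : 0 ≤ (L : ℝ) * θ * sstar := by positivity
  have hLθs := le_card_mul_sub_of_sum_add_le hv hval'
  have hvup := le_add_card_mul_sub_of_sum_add_le hv hc hval'
  rw [Fintype.card_fin] at hLθs hvup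
  have hLpos : (0 : ℝ) < L := by exact_mod_cast hL
  rw [mul_assoc, mul_le_mul_iff_of_pos_left hLpos, mul_comm, ← le_div_iff₀ hθ] at hLθs
  exact ⟨⟨hs, hLθs⟩, fun ℓ => ⟨hv ℓ, hvup ℓ⟩⟩

/-- Lemma 3.1 (compact domain for the DRO optimizers): any optimizer `(x*, s*, v*)` of the
semi-infinite reformulated DRO problem whose optimal value is at most `L f̄` satisfies
`s* ∈ [0, (f̄ − f̲)/θ]` and `v* ∈ [f̲, f̲ + L(f̄ − f̲)]^L`. -/
theorem dro_compact_domain {d m : ℕ} (L : ℕ) (hL : 1 ≤ L)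
    (X : Set (EuclideanSpace ℝ (Fin d))) (Ξ : Set (EuclideanSpace ℝ (Fin m)))
    (hX : IsCompact X) (hXconv : Convex ℝ X) (hΞ : IsCompact Ξ)
    (f : EuclideanSpace ℝ (Fin d) → EuclideanSpace ℝ (Fin m) → ℝ)
    (flow fbar : ℝ) (hbnd : ∀ x ∈ X, ∀ ξ ∈ Ξ, flow ≤ f x ξ ∧ f x ξ ≤ fbar)
    (ξhat : Fin L → EuclideanSpace ℝ (Fin m)) (hξhat : ∀ ℓ, ξhat ℓ ∈ Ξ)
    (θ : ℝ) (hθ : 0 < θ)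
    (xstar : EuclideanSpace ℝ (Fin d)) (hx : xstar ∈ X)
    (sstar : ℝ) (hs : 0 ≤ sstar) (vstar : Fin L → ℝ)
    -- feasibility for the semi-infinite constraints
    (hfeas : ∀ ℓ : Fin L, ∀ ξ ∈ Ξ,
      f xstar ξ - vstar ℓ - sstar * ‖ξ - ξhat ℓ‖ ≤ 0)
    -- objective value at most L f̄ (from optimality and L J*_ref = L J*_DRO ≤ L f̄)
    (hval : ∑ ℓ, vstar ℓ + (L : ℝ) * θ * sstar ≤ (L : ℝ) * fbar) :
    sstar ∈ Set.Icc (0 : ℝ) ((fbar - flow) / θ) ∧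
      ∀ ℓ : Fin L, vstar ℓ ∈ Set.Icc flow (flow + (L : ℝ) * (fbar - flow)) :=
  dro_compact_domain_general L hL X Ξ f flow fbar hbnd ξhat hξhat θ hθ xstar hx sstar hs vstar hfeas
    hval
end

section
/- If v̄ ∈ ℝ^L and s̄ ≥ 0 satisfy max over ℓ and ξ ∈ Ξ of (f(x̄,ξ) − v̄_ℓ − s̄‖ξ − ξ̂^ℓ‖) ≤ ε, then for every probability distribution Q supported on Ξ with 1-Wasserstein distance at most θ from the empirical distribution P̂_L = (1/L)∑_ℓ δ_{ξ̂^ℓ}, it holds that E_Q[f(x̄, ξ)] ≤ (1/L)∑_{ℓ=1}^L v̄_ℓ + θ s̄ + ε. -/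
open MeasureTheory
open scoped ENNReal

/-- ε-feasibility bounds the worst-case expectation: if `(x̄, s̄, v̄)` satisfies the
semi-infinite constraints up to `ε`, then for every probability distribution `Q` supported on
`Ξ` within Wasserstein distance `θ` of the empirical distribution `P̂_L` (witnessed by a
coupling `H`), we have `E_Q[f(x̄,ξ)] ≤ (1/L) ∑ v̄_ℓ + θ s̄ + ε`. -/
theorem eps_feasible_wasserstein_bound {d m : ℕ} (L : ℕ) (hL : 1 ≤ L)
    (X : Set (EuclideanSpace ℝ (Fin d))) (Ξ : Set (EuclideanSpace ℝ (Fin m)))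
    (hΞ : IsCompact Ξ)
    (f : EuclideanSpace ℝ (Fin d) → EuclideanSpace ℝ (Fin m) → ℝ)
    (ξhat : Fin L → EuclideanSpace ℝ (Fin m)) (hξhat : ∀ ℓ, ξhat ℓ ∈ Ξ)
    (θ ε : ℝ) (hθ : 0 < θ) (hε : 0 < ε)
    (xbar : EuclideanSpace ℝ (Fin d)) (hx : xbar ∈ X)
    (sbar : ℝ) (hs : 0 ≤ sbar) (vbar : Fin L → ℝ)
    (hfeasε : ∀ ℓ : Fin L, ∀ ξ ∈ Ξ, f xbar ξ - vbar ℓ - sbar * ‖ξ - ξhat ℓ‖ ≤ ε)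
    (hfmeas : Measurable (f xbar))
    (Q : Measure (EuclideanSpace ℝ (Fin m))) (hQ : IsProbabilityMeasure Q)
    (hQsupp : ∀ᵐ ξ ∂Q, ξ ∈ Ξ)
    (hQint : Integrable (f xbar) Q)
    -- a coupling of Q and the empirical distribution witnessing d_W(Q, P̂_L) ≤ θ
    (H : Measure (EuclideanSpace ℝ (Fin m) × EuclideanSpace ℝ (Fin m)))
    (hH1 : H.map Prod.fst = Q)
    (hH2 : H.map Prod.snd
      = ((L : ℝ≥0∞))⁻¹ • ∑ ℓ : Fin L, Measure.dirac (ξhat ℓ))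
    (hHint : Integrable (fun p => ‖p.1 - p.2‖) H)
    (hHθ : ∫ p, ‖p.1 - p.2‖ ∂H ≤ θ) :
    ∫ ξ, f xbar ξ ∂Q ≤ (1 / (L : ℝ)) * ∑ ℓ, vbar ℓ + θ * sbar + ε := by
  classical
  set T : Finset (EuclideanSpace ℝ (Fin m)) := Finset.image ξhat Finset.univ with hT
  set c : EuclideanSpace ℝ (Fin m) → ℝ :=
    fun t => sInf (vbar '' {k | ξhat k = t}) with hc
  set v : EuclideanSpace ℝ (Fin m) → ℝ :=
    fun ω => ∑ t ∈ T, Set.indicator ({t} : Set _) (fun _ => c t) ω with hv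
  have hvmeas : Measurable v := by
    apply Finset.measurable_sum
    intro t _
    exact measurable_const.indicator (measurableSet_singleton t)
  have hveq : ∀ ℓ, v (ξhat ℓ) = c (ξhat ℓ) := by
    intro ℓ
    have hmem : ξhat ℓ ∈ T := Finset.mem_image_of_mem _ (Finset.mem_univ ℓ)
    simp only [hv, Set.indicator_apply, Set.mem_singleton_iff]
    rw [Finset.sum_ite_eq T (ξhat ℓ) c]
    simp [hmem]
  have hbdd : ∀ ℓ, BddBelow (vbar '' {k | ξhat k = ξhat ℓ}) :=
    fun ℓ => ((Set.finite_range vbar).subset (Set.image_subset_range _ _)).bddBelow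
  have hcle : ∀ ℓ, c (ξhat ℓ) ≤ vbar ℓ := fun ℓ => csInf_le (hbdd ℓ) ⟨ℓ, rfl, rfl⟩
  have hfle : ∀ ξ ∈ Ξ, ∀ ℓ, f xbar ξ ≤ c (ξhat ℓ) + sbar * ‖ξ - ξhat ℓ‖ + ε := by
    intro ξ hξ ℓ
    have h2 : f xbar ξ - sbar * ‖ξ - ξhat ℓ‖ - ε ≤ c (ξhat ℓ) := by
      show f xbar ξ - sbar * ‖ξ - ξhat ℓ‖ - ε ≤ sInf (vbar '' {k | ξhat k = ξhat ℓ})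
      refine le_csInf ⟨vbar ℓ, Set.mem_image_of_mem vbar rfl⟩ ?_
      rintro b ⟨k, hk, rfl⟩
      have hk' : ξhat k = ξhat ℓ := hk
      have := hfeasε k ξ hξ
      rw [hk'] at this
      linarith
    linarith
  -- H is a probability measure
  have hHuniv : H Set.univ = 1 := by
    have : (H.map Prod.fst) Set.univ = 1 := by rw [hH1]; exact measure_univ
    rwa [Measure.map_apply measurable_fst MeasurableSet.univ] at this
  have hHprob : IsProbabilityMeasure H := ⟨hHuniv⟩
  -- a.e. facts
  have hclosed : MeasurableSet Ξ := hΞ.isClosed.measurableSet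
  have hHfst : ∀ᵐ p ∂H, p.1 ∈ Ξ := by
    have h := hQsupp
    rw [← hH1] at h
    exact (ae_map_iff measurable_fst.aemeasurable hclosed).mp h
  have hTmeas : MeasurableSet (↑T : Set (EuclideanSpace ℝ (Fin m))) :=
    T.finite_toSet.measurableSet
  have hHsnd : ∀ᵐ p ∂H, p.2 ∈ (↑T : Set (EuclideanSpace ℝ (Fin m))) := by
    have h2 : ∀ᵐ y ∂(H.map Prod.snd), y ∈ (↑T : Set (EuclideanSpace ℝ (Fin m))) := by
      rw [hH2, ae_iff]
      have : {a | ¬ a ∈ (↑T : Set (EuclideanSpace ℝ (Fin m)))} = (↑T : Set _)ᶜ := rfl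
      rw [this]
      simp only [Measure.smul_apply, Measure.coe_finset_sum, Finset.sum_apply, smul_eq_mul]
      have : ∀ ℓ : Fin L, Measure.dirac (ξhat ℓ) ((↑T : Set _)ᶜ) = 0 := by
        intro ℓ
        rw [Measure.dirac_apply' _ hTmeas.compl]
        simp [show ξhat ℓ ∈ T from Finset.mem_image_of_mem ξhat (Finset.mem_univ ℓ)]
      simp [this]
    exact (ae_map_iff measurable_snd.aemeasurable hTmeas).mp h2
  -- integrability
  have hfH : Integrable (fun p => f xbar p.1) H := by
    rw [← hH1] at hQint
    exact (integrable_map_measure hfmeas.aestronglyMeasurable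
      measurable_fst.aemeasurable).mp hQint
  have hvsnd : Integrable (fun p => v p.2) H := by
    refine Integrable.mono' (integrable_const (∑ t ∈ T, |c t|))
      (hvmeas.comp measurable_snd).aestronglyMeasurable ?_
    filter_upwards with p
    calc ‖v p.2‖ ≤ ∑ t ∈ T, ‖Set.indicator ({t} : Set _) (fun _ => c t) p.2‖ :=
          norm_sum_le _ _
      _ ≤ ∑ t ∈ T, |c t| := by
          apply Finset.sum_le_sum
          intro t _
          exact (norm_indicator_le_norm_self _ _).trans (le_of_eq rfl)
  -- main pointwise bound and integral comparison
  have key : ∫ p, f xbar p.1 ∂H ≤ ∫ p, (v p.2 + sbar * ‖p.1 - p.2‖ + ε) ∂H := by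
    apply integral_mono_ae hfH
    · exact (hvsnd.add (hHint.const_mul sbar)).add (integrable_const ε)
    · filter_upwards [hHfst, hHsnd] with p h1 h2
      obtain ⟨ℓ, _, hℓ⟩ := Finset.mem_image.mp h2
      calc f xbar p.1 ≤ c (ξhat ℓ) + sbar * ‖p.1 - ξhat ℓ‖ + ε := hfle _ h1 ℓ
        _ = v p.2 + sbar * ‖p.1 - p.2‖ + ε := by rw [← hℓ, hveq]
  -- compute RHS
  have hsplit : ∫ p, (v p.2 + sbar * ‖p.1 - p.2‖ + ε) ∂H
      = ∫ p, v p.2 ∂H + sbar * ∫ p, ‖p.1 - p.2‖ ∂H + ε := by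
    have hI2 : Integrable (fun p : EuclideanSpace ℝ (Fin m) × EuclideanSpace ℝ (Fin m)
        => sbar * ‖p.1 - p.2‖) H := hHint.const_mul sbar
    have hI1 : Integrable (fun p : EuclideanSpace ℝ (Fin m) × EuclideanSpace ℝ (Fin m)
        => v p.2 + sbar * ‖p.1 - p.2‖) H := hvsnd.add hI2
    rw [integral_add hI1 (integrable_const ε), integral_add hvsnd hI2, integral_const,
        integral_const_mul]
    simp [hHuniv]
  have hLpos : (0 : ℝ) < (L : ℝ) := by exact_mod_cast hL
  have hint_v : ∫ p, v p.2 ∂H = (1 / (L : ℝ)) * ∑ ℓ, v (ξhat ℓ) := by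
    rw [← integral_map measurable_snd.aemeasurable hvmeas.aestronglyMeasurable, hH2,
        integral_smul_measure, integral_finset_sum_measure (fun ℓ _ => by
          exact (integrable_const (v (ξhat _))).congr (ae_eq_dirac v).symm)]
    simp only [integral_dirac]
    rw [ENNReal.toReal_inv]
    simp [one_div, smul_eq_mul]
  have hsum_le : ∑ ℓ, v (ξhat ℓ) ≤ ∑ ℓ, vbar ℓ := by
    apply Finset.sum_le_sum
    intro ℓ _
    rw [hveq ℓ]; exact hcle ℓ
  have hQint_eq : ∫ ξ, f xbar ξ ∂Q = ∫ p, f xbar p.1 ∂H := by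
    rw [← hH1, integral_map measurable_fst.aemeasurable hfmeas.aestronglyMeasurable]
  rw [hQint_eq]
  calc ∫ p, f xbar p.1 ∂H ≤ ∫ p, v p.2 ∂H + sbar * ∫ p, ‖p.1 - p.2‖ ∂H + ε := by
        rw [← hsplit]; exact key
    _ ≤ (1 / (L : ℝ)) * ∑ ℓ, vbar ℓ + θ * sbar + ε := by
        rw [hint_v]
        have h1 : (1 / (L : ℝ)) * ∑ ℓ, v (ξhat ℓ) ≤ (1 / (L : ℝ)) * ∑ ℓ, vbar ℓ :=
          mul_le_mul_of_nonneg_left hsum_le (by positivity)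
        have h2 : sbar * ∫ p, ‖p.1 - p.2‖ ∂H ≤ θ * sbar := by
          rw [mul_comm θ sbar]
          exact mul_le_mul_of_nonneg_left hHθ hs
        linarith
end
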